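/- arXiv:1208.2557 — 3 statements merged into one kernel-verified Lean document; each statement's English description precedes it below -/
import Mathlib

section
/- Let K be a sub-Markov kernel on an interval E with continuous density k, and let h be an eigenfunction of K with eigenvalue λ = e^{-u}. Suppose A ⊆ E satisfies |e^{-u}| > γ(A) := sup_{x∈E∖A} P_x[X_1 ∈ E∖A]. Then h(x) = E_x[e^{u τ_A} h(X_{τ_A}) 1_{τ_A < ∞}] for all x ∈ E, where τ_A = inf{t ≥ 1 : X_t ∈ A}. -/
/-
Let `Q f x = ∫_{E∖A} f dκ_x` be the transition operator of the chain killed on leaving `E ∖ A`.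
Splitting the eigen-equation over `A` and `E ∖ A` gives `e^{-u} h = ∫_A h dκ + Q h` on `E`,
and applying `Qⁿ` gives `e^{-u} Qⁿ h = hitE n + Qⁿ⁺¹ h` on `E`. With `c n = e^{un} Qⁿ h x`,
the `n`-th term of the series is therefore `c n - c (n + 1)`, so the series telescopes to
`c 0 = h x`, provided `c` is summable: this holds because `‖Qⁿ⁺¹ h‖ ≤ M γⁿ` (with `M` a bound
on `‖h‖`) and `γ |e^u| < 1`.
-/

open MeasureTheory ProbabilityTheory

/-- `hitE κ E A h n x = E_x[h(X_{τ_A}) 1_{τ_A = n+1}]`: expectation of `h` at the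
first-return location, on the event that the first return to `A` occurs at time `n+1`. -/
noncomputable def hitE (κ : Kernel ℝ ℝ) (E A : Set ℝ) (h : ℝ → ℂ) : ℕ → ℝ → ℂ
  | 0, x => ∫ y in A, h y ∂(κ x)
  | n+1, x => ∫ y in E \ A, hitE κ E A h n y ∂(κ x)

open Filter Topology Set

section KilledOperator

variable {α : Type*} [MeasurableSpace α] {κ : Kernel α α} {s : Set α} {f g : α → ℂ} {C γ : ℝ}

/-- The transition operator of the chain killed on leaving `s`. -/
noncomputable def killedOp (κ : Kernel α α) (s : Set α) (f : α → ℂ) (x : α) : ℂ :=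
  ∫ y in s, f y ∂κ x

lemma killedOp_congr (hs : MeasurableSet s) (hfg : EqOn f g s) :
    killedOp κ s f = killedOp κ s g :=
  funext fun _ => setIntegral_congr_fun hs hfg

lemma killedOp_const_mul (c : ℂ) (x : α) :
    killedOp κ s (fun y => c * f y) x = c * killedOp κ s f x :=
  integral_const_mul c _

lemma killedOp_add {x : α} (hf : IntegrableOn f s (κ x)) (hg : IntegrableOn g s (κ x)) :
    killedOp κ s (f + g) x = killedOp κ s f x + killedOp κ s g x :=
  integral_add hf hg

lemma measurable_killedOp [IsSFiniteKernel κ] (hs : MeasurableSet s) (hf : Measurable f) :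
    Measurable (killedOp κ s f) := by
  have hind : StronglyMeasurable fun p : α × α => s.indicator f p.2 :=
    (hf.indicator hs).stronglyMeasurable.comp_measurable measurable_snd
  have hmeas := (hind.integral_kernel_prod_right' (κ := κ)).measurable
  simp only [integral_indicator hs] at hmeas
  exact hmeas

lemma integrableOn_of_norm_le [IsFiniteKernel κ] (hf : Measurable f) (hfC : ∀ y, ‖f y‖ ≤ C)
    (x : α) : IntegrableOn f s (κ x) :=
  (Integrable.of_bound hf.aestronglyMeasurable C (Eventually.of_forall hfC)).integrableOn

lemma norm_killedOp_le_mul [IsFiniteKernel κ] (hf : ∀ y ∈ s, ‖f y‖ ≤ C) (x : α) :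
    ‖killedOp κ s f x‖ ≤ C * (κ x).real s :=
  norm_setIntegral_le_of_norm_le_const (measure_lt_top _ _) hf

lemma isFiniteKernel_of_subMarkov (hκ : ∀ x, κ x univ ≤ 1) : IsFiniteKernel κ :=
  ⟨⟨1, ENNReal.one_lt_top, hκ⟩⟩

lemma measureReal_le_one_of_subMarkov (hκ : ∀ x, κ x univ ≤ 1) (x : α) (s : Set α) :
    (κ x).real s ≤ 1 :=
  ENNReal.toReal_le_of_le_ofReal zero_le_one <| by
    simpa using (measure_mono (subset_univ s)).trans (hκ x)

lemma norm_killedOp_le (hκ : ∀ x, κ x univ ≤ 1) (hC : 0 ≤ C) (hf : ∀ y ∈ s, ‖f y‖ ≤ C)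
    (x : α) :
    ‖killedOp κ s f x‖ ≤ C := by
  have := isFiniteKernel_of_subMarkov hκ
  calc ‖killedOp κ s f x‖ ≤ C * (κ x).real s := norm_killedOp_le_mul hf x
    _ ≤ C * 1 := by gcongr; exact measureReal_le_one_of_subMarkov hκ x s
    _ = C := mul_one C

lemma norm_iterate_killedOp_le (hκ : ∀ x, κ x univ ≤ 1) (hf : ∀ y, ‖f y‖ ≤ C) (n : ℕ)
    (x : α) :
    ‖(killedOp κ s)^[n] f x‖ ≤ C := by
  induction n generalizing x with
  | zero => exact hf x
  | succ n ih =>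
    rw [Function.iterate_succ_apply']
    exact norm_killedOp_le hκ ((norm_nonneg _).trans (hf x)) (fun y _ => ih y) x

lemma measurable_iterate_killedOp (hκ : ∀ x, κ x univ ≤ 1) (hs : MeasurableSet s)
    (hf : Measurable f) (n : ℕ) :
    Measurable ((killedOp κ s)^[n] f) := by
  have := isFiniteKernel_of_subMarkov hκ
  induction n with
  | zero => exact hf
  | succ n ih => rw [Function.iterate_succ']; exact measurable_killedOp hs ih

lemma norm_iterate_killedOp_le_pow [IsFiniteKernel κ] (hγ : ∀ x ∈ s, (κ x).real s ≤ γ)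
    (hf : ∀ y, ‖f y‖ ≤ C) (n : ℕ) {x : α} (hx : x ∈ s) :
    ‖(killedOp κ s)^[n] f x‖ ≤ C * γ ^ n := by
  induction n generalizing x with
  | zero => simpa using hf x
  | succ n ih =>
    have hC : 0 ≤ C * γ ^ n := (norm_nonneg _).trans (ih hx)
    rw [Function.iterate_succ_apply']
    calc ‖killedOp κ s ((killedOp κ s)^[n] f) x‖ ≤ C * γ ^ n * (κ x).real s :=
          norm_killedOp_le_mul (fun y hy => ih hy) x
      _ ≤ C * γ ^ n * γ := by gcongr; exact hγ x hx
      _ = C * γ ^ (n + 1) := by ring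

lemma norm_iterate_succ_killedOp_le_pow (hκ : ∀ x, κ x univ ≤ 1) (hγ0 : 0 ≤ γ)
    (hγ : ∀ x ∈ s, (κ x).real s ≤ γ) (hf : ∀ y, ‖f y‖ ≤ C) (n : ℕ) (x : α) :
    ‖(killedOp κ s)^[n + 1] f x‖ ≤ C * γ ^ n := by
  have := isFiniteKernel_of_subMarkov hκ
  have hC : 0 ≤ C := (norm_nonneg _).trans (hf x)
  rw [Function.iterate_succ_apply']
  exact norm_killedOp_le hκ (by positivity)
    (fun y hy => norm_iterate_killedOp_le_pow hγ hf n hy) x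

lemma eqOn_const_mul_iterate_killedOp {E : Set α} {c : ℂ} {D : ℝ} (hκ : ∀ x, κ x univ ≤ 1)
    (hs : MeasurableSet s) (hsE : s ⊆ E) (hf : Measurable f) (hfC : ∀ y, ‖f y‖ ≤ C)
    (hg : Measurable g) (hgD : ∀ y, ‖g y‖ ≤ D)
    (hfg : EqOn (fun y => c * f y) (g + killedOp κ s f) E) (n : ℕ) :
    EqOn (fun y => c * (killedOp κ s)^[n] f y)
      ((killedOp κ s)^[n] g + (killedOp κ s)^[n + 1] f) E := by
  have := isFiniteKernel_of_subMarkov hκ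
  induction n with
  | zero => simpa using hfg
  | succ n ih =>
    intro x _
    have hint : ∀ {h : α → ℂ} {B : ℝ}, Measurable h → (∀ y, ‖h y‖ ≤ B) → ∀ m,
        IntegrableOn ((killedOp κ s)^[m] h) s (κ x) := fun hh hB m =>
      integrableOn_of_norm_le (measurable_iterate_killedOp hκ hs hh m)
        (norm_iterate_killedOp_le hκ hB m) x
    simp only [Pi.add_apply, Function.iterate_succ_apply' _ (n + 1),
      Function.iterate_succ_apply' _ n]
    rw [← killedOp_const_mul, killedOp_congr hs (ih.mono hsE),
      killedOp_add (hint hg hgD n) (hint hf hfC (n + 1)), Function.iterate_succ_apply']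

end KilledOperator

lemma hasSum_sub_succ {G : Type*} [AddCommGroup G] [TopologicalSpace G]
    [IsTopologicalAddGroup G] [T2Space G] {c : ℕ → G} (hc : Summable c) :
    HasSum (fun n => c n - c (n + 1)) (c 0) := by
  have hshift := (hasSum_nat_add_iff' 1).2 hc.hasSum
  rw [Finset.sum_range_one] at hshift
  simpa using hc.hasSum.sub hshift

lemma summable_exp_mul_of_norm_succ_le {r : ℕ → ℂ} {u : ℂ} {M γ : ℝ} (hγ0 : 0 ≤ γ)
    (hγ : γ < ‖Complex.exp (-u)‖) (hr : ∀ n, ‖r (n + 1)‖ ≤ M * γ ^ n) :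
    Summable fun n : ℕ => Complex.exp (u * n) * r n := by
  have hρ : γ * ‖Complex.exp u‖ < 1 := by
    calc γ * ‖Complex.exp u‖ < ‖Complex.exp (-u)‖ * ‖Complex.exp u‖ :=
          mul_lt_mul_of_pos_right hγ (norm_pos_iff.2 (Complex.exp_ne_zero u))
      _ = 1 := by rw [← norm_mul, ← Complex.exp_add]; simp
  rw [← summable_nat_add_iff 1]
  refine Summable.of_norm_bounded
    ((summable_geometric_of_lt_one (by positivity) hρ).mul_left (M * ‖Complex.exp u‖))
    fun n => ?_
  calc ‖Complex.exp (u * ↑(n + 1)) * r (n + 1)‖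
        = ‖Complex.exp u‖ ^ (n + 1) * ‖r (n + 1)‖ := by
        rw [norm_mul, mul_comm u, Complex.exp_nat_mul, norm_pow]
    _ ≤ ‖Complex.exp u‖ ^ (n + 1) * (M * γ ^ n) := by gcongr; exact hr n
    _ = M * ‖Complex.exp u‖ * (γ * ‖Complex.exp u‖) ^ n := by ring

lemma hitE_eq_iterate_killedOp (κ : Kernel ℝ ℝ) (E A : Set ℝ) (h : ℝ → ℂ) (n : ℕ) :
    hitE κ E A h n = (killedOp κ (E \ A))^[n] (killedOp κ A h) := by
  induction n with
  | zero => rfl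
  | succ n ih => rw [Function.iterate_succ_apply', ← ih]; rfl

/-- If `h` is a (bounded, measurable) eigenfunction of `K` with eigenvalue `λ = e^{-u}`,
and `A ⊆ E` satisfies `|e^{-u}| > γ(A) = sup_{x∈E∖A} P_x[X_1 ∈ E∖A]`, then
`h(x) = E_x[e^{uτ_A} h(X_{τ_A}) 1_{τ_A<∞}] = Σ_{n≥0} e^{u(n+1)} E_x[h(X_{n+1}) 1_{τ_A=n+1}]`
for all `x ∈ E`. -/
theorem stmt2 (κ : Kernel ℝ ℝ) (E A : Set ℝ) (hE : MeasurableSet E)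
    (hA : MeasurableSet A) (hAE : A ⊆ E)
    (hsub : ∀ x, (κ x) Set.univ ≤ 1)
    (h : ℝ → ℂ) (hmeas : Measurable h) (hbdd : ∃ M : ℝ, ∀ x, ‖h x‖ ≤ M)
    (u : ℂ) (heig : ∀ x ∈ E, (∫ y in E, h y ∂(κ x)) = Complex.exp (-u) * h x)
    (γ : ℝ) (hγ0 : 0 ≤ γ)
    (hγ : ∀ x ∈ E \ A, ((κ x) (E \ A)).toReal ≤ γ)
    (hu : γ < ‖Complex.exp (-u)‖) :
    ∀ x ∈ E, h x = ∑' n : ℕ, Complex.exp (u * ((n : ℂ) + 1)) * hitE κ E A h n x := by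
  intro x hx
  obtain ⟨M, hM⟩ := hbdd
  have := isFiniteKernel_of_subMarkov hsub
  have hsplit : EqOn (fun y => Complex.exp (-u) * h y)
      (killedOp κ A h + killedOp κ (E \ A) h) E := fun y hy => by
    dsimp only [Pi.add_apply]
    rw [← heig y hy, ← integral_inter_add_sdiff hA (integrableOn_of_norm_le hmeas hM y),
      inter_eq_self_of_subset_right hAE]
    rfl
  have hexit_le : ∀ y, ‖killedOp κ A h y‖ ≤ M :=
    norm_killedOp_le hsub ((norm_nonneg _).trans (hM x)) fun z _ => hM z
  have hstep := eqOn_const_mul_iterate_killedOp hsub (hE.diff hA) sdiff_subset hmeas hM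
    (measurable_killedOp hA hmeas) hexit_le hsplit
  have hsum := hasSum_sub_succ <| summable_exp_mul_of_norm_succ_le
    (r := fun n => (killedOp κ (E \ A))^[n] h x) hγ0 hu
    (norm_iterate_succ_killedOp_le_pow hsub hγ0 hγ hM · x)
  calc h x = Complex.exp (u * (0 : ℕ)) * (killedOp κ (E \ A))^[0] h x := by simp
    _ = ∑' n : ℕ, Complex.exp (u * ((n : ℂ) + 1)) * hitE κ E A h n x := by
      rw [← hsum.tsum_eq]
      refine tsum_congr fun n => ?_
      rw [hitE_eq_iterate_killedOp, ← sub_eq_of_eq_add (hstep n hx), mul_sub, ← mul_assoc,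
        ← Complex.exp_add]
      push_cast
      ring_nf
end

section
/- Consider the linearized large-deviation problem near the unstable orbit: trajectories (r(u), p_r(u)) solving r' = λ r + D(u) p_r, p_r' = −λ p_r, with λ > 0 and D continuous, positive, 1-periodic, and rate functional I⁰(γ) = (1/2)∫ D(u) p_r(u)² du. Let δ > 0, r(0) = δ, and let I⁰_∞ be the value of I⁰ along the solution on the stable manifold {r = −h_per(φ) p_r} (reaching r = 0 in infinite time), and I⁰_φ the minimal value of I⁰ over solutions with r(0) = δ and r(φ) = 0. Then I⁰_φ − I⁰_∞ = (δ²/2) e^{−2λφ} (h_per(φ)/h_per(0)²) · (1 + O(e^{−2λφ})). -/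
open MeasureTheory

/-- `h_per(φ) = (e^{2λφ}/(1 - e^{-2λ})) ∫_φ^{φ+1} e^{-2λu} D(u) du`, the 1-periodic
solution of `h' = 2λh − D`. -/
noncomputable def hper (lam : ℝ) (D : ℝ → ℝ) (φ : ℝ) : ℝ :=
  Real.exp (2*lam*φ) / (1 - Real.exp (-2*lam)) * ∫ u in φ..(φ+1), Real.exp (-2*lam*u) * D u

/-- Value of the rate functional `I⁰(γ) = (1/2)∫ D p_r² du` along the stable-manifold
solution starting at `r(0) = δ`, i.e. with `p_r(0) = −δ/h_per(0)`, `p_r(u) = e^{−λu}p_r(0)`,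
which reaches `r = 0` in infinite time. -/
noncomputable def Iinf (lam : ℝ) (D : ℝ → ℝ) (δ : ℝ) : ℝ :=
  (1/2) * ∫ u in Set.Ioi (0:ℝ), D u * (Real.exp (-lam*u) * (-δ / hper lam D 0))^2

/-- Minimal value of the rate functional `I⁰` over solutions of the linear Hamilton system
`r' = λr + D p_r`, `p_r' = −λ p_r` with `r(0) = δ` and `r(φ) = 0`: the boundary conditions
force `p_r(0) = −δ/(h_per(0) − e^{−2λφ} h_per(φ))` and `p_r(u) = e^{−λu} p_r(0)`. -/
noncomputable def Iphi (lam : ℝ) (D : ℝ → ℝ) (δ φ : ℝ) : ℝ :=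
  (1/2) * ∫ u in (0:ℝ)..φ,
    D u * (Real.exp (-lam*u) * (-δ / (hper lam D 0 - Real.exp (-2*lam*φ) * hper lam D φ)))^2

/-! Every admissible solution has `p_r(u) = e^{-λu} p_r(0)`, so `I⁰` equals
`(p_r(0)²/2) ∫ e^{-2λu} D(u) du`. Periodicity of `D` identifies the tail `∫_φ^∞ e^{-2λu} D(u) du`
with `e^{-2λφ} h_per(φ)`; hence `I⁰_∞ = δ²/(2 h_per(0))` and `I⁰_φ = δ²/(2A)` with
`A = ∫_0^φ e^{-2λu} D(u) du = h_per(0) - e^{-2λφ} h_per(φ)`. The error term is then exactly the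
main term times `e^{-2λφ} h_per(φ) / A`, which is `O(e^{-2λφ})` because `D` is bounded and
`A ≥ ∫_0^1 e^{-2λu} D(u) du > 0` once `φ ≥ 1`. -/

open Set

section RateFunctional

variable {lam : ℝ} {D : ℝ → ℝ}

lemma integrableOn_Ioi_exp_mul (hlam : 0 < lam) (hD : Continuous D) {M : ℝ}
    (hM : ∀ u, |D u| ≤ M) (φ : ℝ) :
    IntegrableOn (fun u => Real.exp (-2*lam*u) * D u) (Ioi φ) := by
  refine ((exp_neg_integrableOn_Ioi φ (by positivity : 0 < 2*lam)).const_mul M).mono'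
    (by fun_prop) (ae_of_all _ fun u => ?_)
  rw [Real.norm_eq_abs, abs_mul, Real.abs_exp, neg_mul, mul_comm M]
  exact mul_le_mul_of_nonneg_left (hM u) (Real.exp_pos _).le

lemma integral_Ioi_exp_mul_add_one (hDper : Function.Periodic D 1) (φ : ℝ) :
    ∫ u in Ioi (φ + 1), Real.exp (-2*lam*u) * D u
      = Real.exp (-2*lam) * ∫ u in Ioi φ, Real.exp (-2*lam*u) * D u := by
  have hshift := (measurePreserving_add_right volume (1:ℝ)).setIntegral_preimage_emb
    (measurableEmbedding_addRight 1) (fun u => Real.exp (-2*lam*u) * D u) (Ioi (φ + 1))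
  rw [preimage_add_const_Ioi, add_sub_cancel_right] at hshift
  rw [← hshift, ← integral_const_mul]
  refine setIntegral_congr_fun measurableSet_Ioi fun u _ => ?_
  rw [hDper u, ← mul_assoc, ← Real.exp_add]
  ring_nf

/-- By periodicity the tail `T(φ) = ∫_φ^∞ e^{-2λu} D(u) du` satisfies
`T(φ) = ∫_φ^{φ+1} e^{-2λu} D(u) du + e^{-2λ} T(φ)`. -/
lemma integral_Ioi_exp_mul_eq_hper (hlam : 0 < lam) (hD : Continuous D)
    (hDper : Function.Periodic D 1) {M : ℝ} (hM : ∀ u, |D u| ≤ M) (φ : ℝ) :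
    ∫ u in Ioi φ, Real.exp (-2*lam*u) * D u = Real.exp (-2*lam*φ) * hper lam D φ := by
  have hsplit := intervalIntegral.integral_interval_add_Ioi
    (integrableOn_Ioi_exp_mul hlam hD hM φ) (integrableOn_Ioi_exp_mul hlam hD hM (φ + 1))
  rw [integral_Ioi_exp_mul_add_one hDper] at hsplit
  have hexp : Real.exp (-2*lam*φ) * Real.exp (2*lam*φ) = 1 := by
    rw [← Real.exp_add]; ring_nf; exact Real.exp_zero
  have hr1 : 1 - Real.exp (-2*lam) ≠ 0 :=
    (sub_pos.mpr (Real.exp_lt_one_iff.mpr (by linarith))).ne'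
  unfold hper
  rw [← mul_assoc, mul_div_assoc', hexp, one_div_mul_eq_div, eq_div_iff hr1]
  linarith

lemma hper_zero_sub_exp_mul_hper (hlam : 0 < lam) (hD : Continuous D)
    (hDper : Function.Periodic D 1) {M : ℝ} (hM : ∀ u, |D u| ≤ M) (φ : ℝ) :
    hper lam D 0 - Real.exp (-2*lam*φ) * hper lam D φ
      = ∫ u in (0:ℝ)..φ, Real.exp (-2*lam*u) * D u := by
  have h0 := integral_Ioi_exp_mul_eq_hper hlam hD hDper hM 0
  rw [mul_zero, Real.exp_zero, one_mul] at h0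
  rw [← h0, ← integral_Ioi_exp_mul_eq_hper hlam hD hDper hM φ]
  exact intervalIntegral.integral_Ioi_sub_Ioi' (integrableOn_Ioi_exp_mul hlam hD hM 0)
    (integrableOn_Ioi_exp_mul hlam hD hM φ)

lemma integral_Ioi_exp_mul_le (hlam : 0 < lam) (hD : Continuous D) {M : ℝ}
    (hM : ∀ u, |D u| ≤ M) (φ : ℝ) :
    ∫ u in Ioi φ, Real.exp (-2*lam*u) * D u ≤ M / (2*lam) * Real.exp (-2*lam*φ) := by
  have hexp : ∫ u in Ioi φ, Real.exp (-2*lam*u) = Real.exp (-2*lam*φ) / (2*lam) := by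
    rw [integral_exp_mul_Ioi (by linarith), neg_div, ← div_neg, neg_mul, neg_neg]
  calc ∫ u in Ioi φ, Real.exp (-2*lam*u) * D u
      ≤ ∫ u in Ioi φ, Real.exp (-2*lam*u) * M :=
        setIntegral_mono_on (integrableOn_Ioi_exp_mul hlam hD hM φ)
          ((integrableOn_exp_mul_Ioi (by linarith) φ).mul_const M) measurableSet_Ioi
          fun u _ => mul_le_mul_of_nonneg_left ((le_abs_self _).trans (hM u)) (Real.exp_pos _).le
    _ = M / (2*lam) * Real.exp (-2*lam*φ) := by
        rw [integral_mul_const, hexp]; ring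

lemma mul_sq_exp_neg_mul (lam c d u : ℝ) :
    d * (Real.exp (-lam*u) * c)^2 = c^2 * (Real.exp (-2*lam*u) * d) := by
  rw [mul_pow, ← Real.exp_nat_mul]
  ring_nf

lemma half_mul_neg_div_sq_mul (δ A : ℝ) : 1/2 * ((-δ / A)^2 * A) = δ^2 / (2*A) := by
  rcases eq_or_ne A 0 with hA | hA
  · simp [hA]
  · field_simp

lemma Iinf_eq (hlam : 0 < lam) (hD : Continuous D)
    (hDper : Function.Periodic D 1) {M : ℝ} (hM : ∀ u, |D u| ≤ M) (δ : ℝ) :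
    Iinf lam D δ = δ^2 / (2 * hper lam D 0) := by
  have h0 := integral_Ioi_exp_mul_eq_hper hlam hD hDper hM 0
  rw [mul_zero, Real.exp_zero, one_mul] at h0
  unfold Iinf
  simp only [mul_sq_exp_neg_mul, integral_const_mul, h0]
  exact half_mul_neg_div_sq_mul δ _

lemma Iphi_eq (hlam : 0 < lam) (hD : Continuous D)
    (hDper : Function.Periodic D 1) {M : ℝ} (hM : ∀ u, |D u| ≤ M) (δ φ : ℝ) :
    Iphi lam D δ φ = δ^2 / (2 * ∫ u in (0:ℝ)..φ, Real.exp (-2*lam*u) * D u) := by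
  unfold Iphi
  rw [hper_zero_sub_exp_mul_hper hlam hD hDper hM]
  simp only [mul_sq_exp_neg_mul, intervalIntegral.integral_const_mul]
  exact half_mul_neg_div_sq_mul δ _

lemma Iphi_sub_Iinf_sub_eq_mul (hlam : 0 < lam) (hD : Continuous D)
    (hDper : Function.Periodic D 1) {M : ℝ} (hM : ∀ u, |D u| ≤ M) (δ φ : ℝ)
    (hA : ∫ u in (0:ℝ)..φ, Real.exp (-2*lam*u) * D u ≠ 0) (h0 : hper lam D 0 ≠ 0) :
    Iphi lam D δ φ - Iinf lam D δ
        - (δ^2/2) * Real.exp (-2*lam*φ) * hper lam D φ / (hper lam D 0)^2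
      = (δ^2/2) * Real.exp (-2*lam*φ) * hper lam D φ / (hper lam D 0)^2
        * (Real.exp (-2*lam*φ) * hper lam D φ / ∫ u in (0:ℝ)..φ, Real.exp (-2*lam*u) * D u) := by
  rw [Iphi_eq hlam hD hDper hM, Iinf_eq hlam hD hDper hM,
    ← hper_zero_sub_exp_mul_hper hlam hD hDper hM, mul_assoc (δ^2/2)] at *
  generalize Real.exp (-2*lam*φ) * hper lam D φ = E at *
  generalize hper lam D 0 = H at *
  field_simp
  ring

end RateFunctional

theorem stmt9_general (lam : ℝ) (hlam : 0 < lam) (D : ℝ → ℝ) (hD : Continuous D)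
    (hDpos : ∀ u, 0 < D u) (hDper : ∀ u, D (u + 1) = D u)
    (δ : ℝ) :
    ∃ C > (0:ℝ), ∃ φ₁ : ℝ, ∀ φ ≥ φ₁,
      |Iphi lam D δ φ - Iinf lam D δ
          - (δ^2/2) * Real.exp (-2*lam*φ) * hper lam D φ / (hper lam D 0)^2|
        ≤ C * ((δ^2/2) * Real.exp (-2*lam*φ) * hper lam D φ / (hper lam D 0)^2)
            * Real.exp (-2*lam*φ) := by
  obtain ⟨M, hM⟩ : ∃ M, ∀ u, |D u| ≤ M := by
    obtain ⟨M, hM⟩ := isBounded_iff_forall_norm_le.mp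
      (Function.Periodic.isBounded_of_continuous hDper one_ne_zero hD)
    exact ⟨M, fun u => hM _ (mem_range_self u)⟩
  have hMpos : 0 < M := (hDpos 0).trans_le ((le_abs_self _).trans (hM 0))
  have hg_pos u : 0 < Real.exp (-2*lam*u) * D u := mul_pos (Real.exp_pos _) (hDpos u)
  have hg : Continuous fun u => Real.exp (-2*lam*u) * D u := by fun_prop
  set a := ∫ u in (0:ℝ)..1, Real.exp (-2*lam*u) * D u
  have ha : 0 < a := intervalIntegral.intervalIntegral_pos_of_pos_on
    (hg.intervalIntegrable _ _) (fun u _ => hg_pos u) one_pos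
  refine ⟨M / (2*lam*a), by positivity, 1, fun φ hφ => ?_⟩
  set A := ∫ u in (0:ℝ)..φ, Real.exp (-2*lam*u) * D u
  have haA : a ≤ A := intervalIntegral.integral_mono_interval le_rfl zero_le_one hφ
    (ae_of_all _ fun u => (hg_pos u).le) (hg.intervalIntegrable _ _)
  have hE := integral_Ioi_exp_mul_eq_hper hlam hD hDper hM φ
  have hE0 : 0 ≤ Real.exp (-2*lam*φ) * hper lam D φ :=
    hE ▸ setIntegral_nonneg measurableSet_Ioi fun u _ => (hg_pos u).le
  have hratio : Real.exp (-2*lam*φ) * hper lam D φ / A ≤ M / (2*lam*a) * Real.exp (-2*lam*φ) :=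
    calc _ ≤ M / (2*lam) * Real.exp (-2*lam*φ) / a :=
          div_le_div₀ (by positivity) (hE ▸ integral_Ioi_exp_mul_le hlam hD hM φ) ha haA
      _ = _ := by ring
  have h0 : 0 < hper lam D 0 := by
    linarith [hper_zero_sub_exp_mul_hper hlam hD hDper hM φ]
  have hmain : 0 ≤ (δ^2/2) * Real.exp (-2*lam*φ) * hper lam D φ / (hper lam D 0)^2 :=
    div_nonneg (by rw [mul_assoc]; exact mul_nonneg (by positivity) hE0) (sq_nonneg _)
  rw [Iphi_sub_Iinf_sub_eq_mul hlam hD hDper hM δ φ (ha.trans_le haA).ne' h0.ne',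
    abs_of_nonneg (mul_nonneg hmain (div_nonneg hE0 (ha.le.trans haA)))]
  exact (mul_le_mul_of_nonneg_left hratio hmain).trans_eq (by ring)

/-- Comparison of rate functions in the linear case:
`I⁰_φ − I⁰_∞ = (δ²/2) e^{−2λφ} (h_per(φ)/h_per(0)²)(1 + O(e^{−2λφ}))`. -/
theorem stmt9 (lam : ℝ) (hlam : 0 < lam) (D : ℝ → ℝ) (hD : Continuous D)
    (hDpos : ∀ u, 0 < D u) (hDper : ∀ u, D (u + 1) = D u)
    (δ : ℝ) (hδ : 0 < δ) :
    ∃ C > (0:ℝ), ∃ φ₁ : ℝ, ∀ φ ≥ φ₁,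
      |Iphi lam D δ φ - Iinf lam D δ
          - (δ^2/2) * Real.exp (-2*lam*φ) * hper lam D φ / (hper lam D 0)^2|
        ≤ C * ((δ^2/2) * Real.exp (-2*lam*φ) * hper lam D φ / (hper lam D 0)^2)
            * Real.exp (-2*lam*φ) :=
  stmt9_general lam hlam D hD hDpos hDper δ
end

section
/- Let λ > 0, let D be continuous positive 1-periodic, h_per the periodic solution of h' = 2λh − D, and define θ'(φ) = D(φ)/(2 h_per(φ)). Then any primitive θ of θ' satisfies θ(φ+1) = θ(φ) + λ. In particular, θ(φ) = λφ − (1/2)log((1/2)δ² h_per(φ)/h_per(s*)²) is such a primitive, for any constants δ > 0 and s*. -/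
/-!
`h_per` is positive, 1-periodic and solves `h' = 2λh − D`, so `θ₀ = λφ − ½ log (c · h_per)` has
derivative `λ − h_per'/(2 h_per) = D/(2 h_per)` and, by periodicity of `h_per`, satisfies
`θ₀(φ + 1) = θ₀(φ) + λ`. Any other primitive differs from `θ₀` by a constant.
-/

open Real intervalIntegral

theorem Continuous.hasDerivAt_integral_add_const {E : Type*} [NormedAddCommGroup E]
    [NormedSpace ℝ E] [CompleteSpace E] {f : ℝ → E} (hf : Continuous f) (c x : ℝ) :
    HasDerivAt (fun y => ∫ u in y..y + c, f u) (f (x + c) - f x) x := by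
  have hupper := (hf.integral_hasStrictDerivAt 0 (x + c)).hasDerivAt.comp_add_const x c
  refine (hupper.sub (hf.integral_hasStrictDerivAt 0 x).hasDerivAt).congr_of_eventuallyEq
    (Filter.Eventually.of_forall fun y => ?_)
  exact (integral_interval_sub_left (hf.intervalIntegrable _ _) (hf.intervalIntegrable _ _)).symm

theorem sub_eq_sub_of_hasDerivAt {f g f' : ℝ → ℝ} (hf : ∀ x, HasDerivAt f (f' x) x)
    (hg : ∀ x, HasDerivAt g (f' x) x) (a b : ℝ) : f b - f a = g b - g a := by
  obtain ⟨c, hc⟩ := isOpen_univ.exists_eq_add_of_deriv_eq isPreconnected_univ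
    (fun x _ => (hf x).differentiableAt.differentiableWithinAt)
    (fun x _ => (hg x).differentiableAt.differentiableWithinAt)
    (fun x _ => (hf x).deriv.trans (hg x).deriv.symm)
  rw [hc (Set.mem_univ a), hc (Set.mem_univ b)]
  ring

theorem hasDerivAt_linear_sub_half_log {h : ℝ → ℝ} {lam d c φ : ℝ}
    (hh : HasDerivAt h (2 * lam * h φ - d) φ) (hc : c ≠ 0) (hφ : h φ ≠ 0) :
    HasDerivAt (fun ψ => lam * ψ - 1 / 2 * log (c * h ψ)) (d / (2 * h φ)) φ := by
  refine (((hasDerivAt_id φ).const_mul lam).sub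
    (((hh.const_mul c).log (mul_ne_zero hc hφ)).const_mul (1 / 2))).congr_deriv ?_
  field_simp
  ring

section hper

variable {lam : ℝ} {D : ℝ → ℝ}

theorem hper_periodic (hD : Function.Periodic D 1) : Function.Periodic (hper lam D) 1 := by
  intro φ
  have hshift : ∫ u in (φ + 1)..(φ + 1 + 1), exp (-2 * lam * u) * D u
      = exp (-2 * lam) * ∫ u in φ..(φ + 1), exp (-2 * lam * u) * D u := by
    rw [← integral_comp_add_right, ← integral_const_mul]
    congr 1 with u
    rw [hD, mul_add, mul_one, exp_add]
    ring
  rw [hper, hper, hshift, mul_add, exp_add, mul_one, neg_mul, exp_neg]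
  field_simp

theorem hper_pos (hlam : 0 < lam) (hD : Continuous D) (hDpos : ∀ u, 0 < D u) (φ : ℝ) :
    0 < hper lam D φ := by
  have hdenom : 0 < 1 - exp (-2 * lam) := sub_pos.2 (exp_lt_one_iff.2 (by linarith))
  have hcont : Continuous fun u => exp (-2 * lam * u) * D u := by fun_prop
  have hint : 0 < ∫ u in φ..(φ + 1), exp (-2 * lam * u) * D u :=
    intervalIntegral_pos_of_pos_on (hcont.intervalIntegrable _ _)
      (fun u _ => mul_pos (exp_pos _) (hDpos u)) (lt_add_one φ)
  exact mul_pos (div_pos (exp_pos _) hdenom) hint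

theorem hasDerivAt_hper (hlam : lam ≠ 0) (hD : Continuous D) (hDper : Function.Periodic D 1)
    (φ : ℝ) : HasDerivAt (hper lam D) (2 * lam * hper lam D φ - D φ) φ := by
  have hI := (show Continuous fun u => exp (-2 * lam * u) * D u by fun_prop)
    |>.hasDerivAt_integral_add_const 1 φ
  have hE := (((hasDerivAt_id φ).const_mul (2 * lam)).exp).div_const (1 - exp (-2 * lam))
  have hdenom : 1 - exp (-2 * lam) ≠ 0 := by
    rw [sub_ne_zero, ne_comm, Ne, exp_eq_one_iff]; simpa using hlam
  refine (hE.mul hI).congr_deriv ?_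
  have hcancel : exp (2 * lam * φ) * exp (-2 * lam * φ) = 1 := by
    rw [← exp_add, neg_mul, neg_mul, add_neg_cancel, exp_zero]
  -- by periodicity the boundary term of the window integral is `(e^{-2λ} - 1) e^{-2λφ} D φ`
  rw [hper, hDper, id, mul_one, show -2 * lam * (φ + 1) = -2 * lam + -2 * lam * φ by ring, exp_add]
  linear_combination (1 - exp (-2 * lam))⁻¹ * (exp (-2 * lam) - 1) * D φ * hcancel
    - D φ * mul_inv_cancel₀ hdenom

end hper

/-- Any primitive `θ` of `θ'(φ) = D(φ)/(2h_per(φ))` satisfies `θ(φ+1) = θ(φ) + λ`.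
In particular `θ(φ) = λφ − (1/2) log((1/2) δ² h_per(φ)/h_per(s*)²)` is such a primitive,
for any constants `δ > 0` and `s*`. -/
theorem stmt17 (lam : ℝ) (hlam : 0 < lam) (D : ℝ → ℝ) (hD : Continuous D)
    (hDpos : ∀ u, 0 < D u) (hDper : ∀ u, D (u + 1) = D u)
    (δ sstar : ℝ) (hδ : 0 < δ) :
    (∀ θ : ℝ → ℝ, (∀ φ, HasDerivAt θ (D φ / (2 * hper lam D φ)) φ) →
      ∀ φ, θ (φ + 1) = θ φ + lam) ∧
    (∀ φ, HasDerivAt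
      (fun ψ => lam * ψ - (1/2) * Real.log ((1/2) * δ^2 * hper lam D ψ / (hper lam D sstar)^2))
      (D φ / (2 * hper lam D φ)) φ) := by
  have hpos := hper_pos hlam hD hDpos
  have hprimitive : ∀ φ, HasDerivAt
      (fun ψ => lam * ψ - (1/2) * log ((1/2) * δ^2 * hper lam D ψ / (hper lam D sstar)^2))
      (D φ / (2 * hper lam D φ)) φ := fun φ => by
    have hc : 1 / 2 * δ ^ 2 / hper lam D sstar ^ 2 ≠ 0 :=
      div_ne_zero (by positivity) (pow_ne_zero 2 (hpos sstar).ne')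
    simpa only [div_mul_eq_mul_div] using
      hasDerivAt_linear_sub_half_log (hasDerivAt_hper hlam.ne' hD hDper φ) hc (hpos φ).ne'
  refine ⟨fun θ hθ φ => ?_, hprimitive⟩
  have hincrement := sub_eq_sub_of_hasDerivAt hθ hprimitive φ (φ + 1)
  rw [hper_periodic hDper φ] at hincrement
  linarith
end
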